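/- arXiv:1606.02845 — 3 statements merged into one kernel-verified Lean document; each statement's English description precedes it below -/
import Mathlib

section
/- Let f(x) = ∫₀ˣ √(1−τ)/(1+τ) dτ and let C = ∫₀¹ √(1−τ)/(1+τ) dτ. Then for all n ∈ ℕ, ∫₀¹ xⁿ f(x) dx = [ (1 + (−1)ⁿ)·C + (−1)ⁿ·( 6 + 8·Σ_{i=1}^{n} (−4)ⁱ / C(2i,i) ) ] / (n+1) − 4(5+4n)·4ⁿ / ( (2n+1)(2n+3)·C(2n,n) ), where C(2i,i) denotes the central binomial coefficient (2i choose i). -/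
/-!
Integrating by parts, `∫₀¹ xⁿ f = (C - I (n+1)) / (n+1)` with `I m = ∫₀¹ xᵐ √(1-x)/(1+x)`.
Since `x^(m+1)/(1+x) + x^m/(1+x) = x^m`, the moments satisfy `I (m+1) + I m = J m`, where
`J m = ∫₀¹ xᵐ √(1-x)` is a beta integral: the substitution `x = 1 - t²` and the reduction formula
for `∫₀¹ t² (1-t²)ᵏ` give `J m = 2·4ᵐ / ((2m+1)(2m+3) C(2m,m))`. Unrolling the alternating
recurrence from `I 0 = C` gives the closed form.
-/

open MeasureTheory Real intervalIntegral Set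

lemma integral_sq_mul_one_sub_sq_pow_succ (k : ℕ) :
    (2 * (k : ℝ) + 5) * ∫ t in (0:ℝ)..1, t ^ 2 * (1 - t ^ 2) ^ (k + 1) =
      (2 * (k : ℝ) + 2) * ∫ t in (0:ℝ)..1, t ^ 2 * (1 - t ^ 2) ^ k := by
  have hderiv : ∀ x ∈ uIcc (0:ℝ) 1, HasDerivAt (fun t : ℝ => t ^ 3 * (1 - t ^ 2) ^ (k + 1))
      ((2 * (k : ℝ) + 5) * (x ^ 2 * (1 - x ^ 2) ^ (k + 1)) -
        (2 * (k : ℝ) + 2) * (x ^ 2 * (1 - x ^ 2) ^ k)) x := fun x _ => by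
    refine ((hasDerivAt_pow 3 x).mul
      (((hasDerivAt_pow 2 x).const_sub 1).fun_pow (k + 1))).congr_deriv ?_
    push_cast
    ring
  have hint : ∀ m : ℕ, IntervalIntegrable (fun t : ℝ => t ^ 2 * (1 - t ^ 2) ^ m) volume 0 1 :=
    fun m => (by fun_prop : Continuous _).intervalIntegrable _ _
  have hftc := integral_eq_sub_of_hasDerivAt hderiv
    (((hint _).const_mul _).sub ((hint _).const_mul _))
  rw [integral_sub ((hint _).const_mul _) ((hint _).const_mul _),
    intervalIntegral.integral_const_mul, intervalIntegral.integral_const_mul] at hftc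
  norm_num at hftc
  linarith

lemma integral_sq_mul_one_sub_sq_pow (k : ℕ) :
    ∫ t in (0:ℝ)..1, t ^ 2 * (1 - t ^ 2) ^ k =
      4 ^ k / ((2 * (k : ℝ) + 1) * (2 * k + 3) * k.centralBinom) := by
  induction k with
  | zero => norm_num [integral_pow]
  | succ k ih =>
    have hrec : ∫ t in (0:ℝ)..1, t ^ 2 * (1 - t ^ 2) ^ (k + 1) =
        (2 * (k : ℝ) + 2) / (2 * k + 5) * ∫ t in (0:ℝ)..1, t ^ 2 * (1 - t ^ 2) ^ k := by
      rw [div_mul_eq_mul_div, eq_div_iff (by positivity), mul_comm,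
        integral_sq_mul_one_sub_sq_pow_succ]
    have hcb : ((k + 1).centralBinom : ℝ) = 2 * (2 * k + 1) * k.centralBinom / (k + 1) := by
      rw [eq_div_iff (by positivity), mul_comm]
      exact_mod_cast k.succ_mul_centralBinom_succ
    have : (k.centralBinom : ℝ) ≠ 0 := by exact_mod_cast k.centralBinom_ne_zero
    rw [hrec, ih, hcb]
    push_cast
    field_simp
    ring

lemma integral_pow_mul_sqrt_one_sub (k : ℕ) :
    ∫ x in (0:ℝ)..1, x ^ k * √(1 - x) =
      2 * 4 ^ k / ((2 * (k : ℝ) + 1) * (2 * k + 3) * k.centralBinom) := by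
  have hsubst := integral_comp_mul_deriv (a := 1) (b := 0) (f := fun t : ℝ => 1 - t ^ 2)
    (g := fun x : ℝ => x ^ k * √(1 - x)) (fun t _ => (hasDerivAt_pow 2 t).const_sub 1)
    (by fun_prop) (by fun_prop)
  norm_num at hsubst
  have hsqrt : EqOn (fun x : ℝ => (1 - x ^ 2) ^ k * √(x ^ 2) * (2 * x))
      (fun x => 2 * (x ^ 2 * (1 - x ^ 2) ^ k)) (uIcc 0 1) := fun x hx => by
    simp only [sqrt_sq (uIcc_of_le (zero_le_one' ℝ) ▸ hx).1]
    ring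
  rw [← hsubst, integral_symm, neg_neg, integral_congr hsqrt,
    intervalIntegral.integral_const_mul, integral_sq_mul_one_sub_sq_pow, mul_div_assoc]

lemma centralBinom_telescoping_identity (n : ℕ) :
    ((n : ℝ) + 1) * (4 * (5 + 4 * n) * 4 ^ n / ((2 * n + 1) * (2 * n + 3) * n.centralBinom)) +
      ((n : ℝ) + 2) * (4 * (9 + 4 * n) * 4 ^ (n + 1) /
        ((2 * n + 3) * (2 * n + 5) * (n + 1).centralBinom)) =
    2 * 4 ^ (n + 1) / ((2 * (n : ℝ) + 3) * (2 * n + 5) * (n + 1).centralBinom) +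
      8 * 4 ^ (n + 1) / (n + 1).centralBinom := by
  have hcb : ((n + 1).centralBinom : ℝ) = 2 * (2 * n + 1) * n.centralBinom / (n + 1) := by
    rw [eq_div_iff (by positivity), mul_comm]
    exact_mod_cast n.succ_mul_centralBinom_succ
  have : (n.centralBinom : ℝ) ≠ 0 := by exact_mod_cast n.centralBinom_ne_zero
  rw [hcb]
  field_simp
  ring

lemma integral_pow_succ_mul_div_one_add {h : ℝ → ℝ} (hh : ContinuousOn h (Icc 0 1)) (m : ℕ) :
    ∫ x in (0:ℝ)..1, x ^ (m + 1) * (h x / (1 + x)) =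
      (∫ x in (0:ℝ)..1, x ^ m * h x) - ∫ x in (0:ℝ)..1, x ^ m * (h x / (1 + x)) := by
  rw [← uIcc_of_le zero_le_one] at hh
  have hpos : ∀ x ∈ uIcc (0:ℝ) 1, 1 + x ≠ 0 := fun x hx => by
    have := (uIcc_of_le (zero_le_one' ℝ) ▸ hx).1
    positivity
  have hdiv : ContinuousOn (fun x => h x / (1 + x)) (uIcc 0 1) :=
    hh.div (by fun_prop) hpos
  have hint : IntervalIntegrable (fun x => x ^ m * h x) volume 0 1 :=
    ((continuousOn_pow m).mul hh).intervalIntegrable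
  have hint' : IntervalIntegrable (fun x => x ^ m * (h x / (1 + x))) volume 0 1 :=
    ((continuousOn_pow m).mul hdiv).intervalIntegrable
  rw [← integral_sub hint hint']
  refine integral_congr fun x hx => ?_
  have := hpos x hx
  field_simp
  ring

lemma integral_pow_mul_primitive {g : ℝ → ℝ} (hg : ContinuousOn g (Icc 0 1)) (n : ℕ) :
    ∫ x in (0:ℝ)..1, x ^ n * ∫ τ in (0:ℝ)..x, g τ =
      ((∫ τ in (0:ℝ)..1, g τ) - ∫ x in (0:ℝ)..1, x ^ (n + 1) * g x) / (n + 1) := by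
  have hg' : ContinuousOn g (uIcc 0 1) := uIcc_of_le (zero_le_one' ℝ) ▸ hg
  have hprim : ∀ x ∈ Ioo (min 0 1) (max 0 1),
      HasDerivAt (fun x => ∫ τ in (0:ℝ)..x, g τ) (g x) x := fun x hx => by
    rw [min_eq_left zero_le_one, max_eq_right zero_le_one] at hx
    have hcont : ContinuousOn g (Ioo 0 1) := hg.mono Ioo_subset_Icc_self
    exact integral_hasDerivAt_right
      ((hg.mono (Icc_subset_Icc_right hx.2.le)).intervalIntegrable_of_Icc hx.1.le)
      (hcont.stronglyMeasurableAtFilter isOpen_Ioo x hx)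
      (hcont.continuousAt (isOpen_Ioo.mem_nhds hx))
  have hpow : ∀ x ∈ Ioo (min (0:ℝ) 1) (max 0 1),
      HasDerivAt (fun y : ℝ => y ^ (n + 1) / (n + 1)) (x ^ n) x := fun x _ => by
    refine ((hasDerivAt_pow (n + 1) x).div_const _).congr_deriv ?_
    push_cast
    field_simp
  have hparts := integral_mul_deriv_eq_deriv_mul_of_hasDerivAt
    (continuousOn_primitive_interval hg'.integrableOn_Icc) (by fun_prop) hprim hpow
    hg'.intervalIntegrable ((by fun_prop : Continuous fun x : ℝ => x ^ n).intervalIntegrable _ _)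
  simp only [integral_same, zero_mul, sub_zero, one_pow] at hparts
  have hdiv : ∫ x in (0:ℝ)..1, g x * (x ^ (n + 1) / (n + 1)) =
      (∫ x in (0:ℝ)..1, x ^ (n + 1) * g x) / (n + 1) := by
    rw [← intervalIntegral.integral_div]
    exact integral_congr fun x _ => by ring
  rw [integral_congr fun x _ => mul_comm _ _, hparts, hdiv]
  ring

lemma continuousOn_sqrt_one_sub_div_one_add :
    ContinuousOn (fun τ : ℝ => √(1 - τ) / (1 + τ)) (Icc 0 1) :=
  ContinuousOn.div (by fun_prop) (by fun_prop) fun x hx => by have := hx.1; positivity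

lemma integral_pow_succ_mul_sqrt_one_sub_div_one_add (n : ℕ) :
    ∫ x in (0:ℝ)..1, x ^ (n + 1) * (√(1 - x) / (1 + x)) =
      -(-1) ^ n * (∫ τ in (0:ℝ)..1, √(1 - τ) / (1 + τ)) -
        (-1) ^ n * (6 + 8 * ∑ i ∈ Finset.Icc 1 n, (-4 : ℝ) ^ i / i.centralBinom) +
        ((n : ℝ) + 1) *
          (4 * (5 + 4 * n) * 4 ^ n / ((2 * n + 1) * (2 * n + 3) * n.centralBinom)) := by
  have hrec := integral_pow_succ_mul_div_one_add (h := fun x => √(1 - x)) (by fun_prop)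
  induction n with
  | zero =>
    rw [hrec, integral_pow_mul_sqrt_one_sub]
    norm_num
    ring
  | succ n ih =>
    have hsign : ((-1 : ℝ) ^ n) ^ 2 = 1 := by rw [← pow_mul, mul_comm, pow_mul]; norm_num
    rw [hrec, ih, integral_pow_mul_sqrt_one_sub, Finset.sum_Icc_succ_top (by omega), neg_pow 4]
    push_cast
    linear_combination
      -centralBinom_telescoping_identity n + 32 * 4 ^ n / ((n + 1).centralBinom : ℝ) * hsign

/-- Closed form of the Mellin transform of `f(x) = ∫₀ˣ √(1−τ)/(1+τ) dτ`. -/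
theorem mellin_closed_form_int_sqrt (f : ℝ → ℝ) (C : ℝ)
    (hf : ∀ x : ℝ, f x = ∫ τ in (0:ℝ)..x, Real.sqrt (1 - τ) / (1 + τ))
    (hC : C = ∫ τ in (0:ℝ)..1, Real.sqrt (1 - τ) / (1 + τ)) :
    ∀ n : ℕ,
      ∫ x in (0:ℝ)..1, x ^ n * f x =
        ((1 + (-1 : ℝ) ^ n) * C +
            (-1 : ℝ) ^ n *
              (6 + 8 * ∑ i ∈ Finset.Icc 1 n,
                (-4 : ℝ) ^ i / (Nat.choose (2 * i) i : ℝ))) / ((n : ℝ) + 1) -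
          4 * (5 + 4 * (n : ℝ)) * (4 : ℝ) ^ n /
            ((2 * (n : ℝ) + 1) * (2 * (n : ℝ) + 3) * (Nat.choose (2 * n) n : ℝ)) := by
  intro n
  obtain rfl : f = fun x => ∫ τ in (0:ℝ)..x, √(1 - τ) / (1 + τ) := funext hf
  simp only [← Nat.centralBinom_eq_two_mul_choose]
  rw [integral_pow_mul_primitive continuousOn_sqrt_one_sub_div_one_add,
    integral_pow_succ_mul_sqrt_one_sub_div_one_add, ← hC]
  field_simp
  ring
end

section
/- ∫₀¹ log(1−x)/(1+x) dx = (log(2)² − π²/6)/2. -/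
/-!
The substitution `x = (1 - t) / (1 + t)`, an involution of `(0, 1)`, turns the integrand into
`log (2t / (1 + t)) / (1 + t) = log t / (1 + t) + (log 2 - log (1 + t)) / (1 + t)`.
The second summand has the elementary primitive `log 2 * log (1 + t) - log (1 + t) ^ 2 / 2`.
For the first, expanding `1 / (1 + t)` as a geometric series and integrating `t ^ n * log t`
termwise gives `-∑ (-1) ^ n / (n + 1) ^ 2 = -ζ(2) / 2 = -π ^ 2 / 12`.
-/

open MeasureTheory Real Set intervalIntegral

theorem intervalIntegrable_pow_mul_log (n : ℕ) (a b : ℝ) :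
    IntervalIntegrable (fun t : ℝ => t ^ n * log t) volume a b :=
  intervalIntegrable_log'.continuousOn_mul (continuous_pow n).continuousOn

theorem integral_pow_mul_log (n : ℕ) :
    ∫ t in (0:ℝ)..1, t ^ n * log t = -1 / ((n : ℝ) + 1) ^ 2 := by
  let F : ℝ → ℝ := fun t => t ^ (n + 1) * ((n + 1) * log t - 1) / ((n : ℝ) + 1) ^ 2
  -- `t * log t` extends continuously to `t = 0`.
  have hF : Continuous F := by
    have : F = fun t => (t ^ n * (t * log t) * (n + 1) - t ^ (n + 1)) / ((n : ℝ) + 1) ^ 2 := by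
      ext t; ring
    rw [this]
    fun_prop (disch := exact continuous_mul_log)
  have hF' : ∀ t ∈ Ioo (0:ℝ) 1, HasDerivAt F (t ^ n * log t) t := by
    intro t ht
    refine (((hasDerivAt_pow (n + 1) t).mul (((hasDerivAt_log ht.1.ne').const_mul
      ((n : ℝ) + 1)).sub_const 1)).div_const (((n : ℝ) + 1) ^ 2)).congr_deriv ?_
    have ht₀ : t ≠ 0 := ht.1.ne'
    field_simp
    push_cast
    ring
  rw [integral_eq_sub_of_hasDerivAt_of_le zero_le_one hF.continuousOn hF'
    (intervalIntegrable_pow_mul_log n 0 1)]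
  simp [F]

theorem hasSum_one_div_succ_sq : HasSum (fun n : ℕ => 1 / ((n : ℝ) + 1) ^ 2) (π ^ 2 / 6) := by
  simpa using (hasSum_nat_add_iff' 1).mpr hasSum_zeta_two

theorem HasSum.neg_one_pow_div_succ_pow {p : ℕ} {a : ℝ}
    (h : HasSum (fun n : ℕ => 1 / ((n : ℝ) + 1) ^ p) a) :
    HasSum (fun n : ℕ => (-1) ^ n / ((n : ℝ) + 1) ^ p) ((1 - 2 / 2 ^ p) * a) := by
  -- `∑ (-1)ⁿ bₙ = ∑ bₙ - 2 ∑_{n odd} bₙ`, and `b_{2k+1} = b_k / 2 ^ p`.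
  let oddPart : ℕ → ℝ := fun n => (1 - (-1) ^ n) / 2 / ((n : ℝ) + 1) ^ p
  have heven : HasSum (fun k => oddPart (2 * k)) 0 := by simp [oddPart, hasSum_zero]
  have hodd : HasSum (fun k => oddPart (2 * k + 1)) (a / 2 ^ p) := by
    refine (h.div_const (2 ^ p)).congr_fun fun k => ?_
    have hk : ((2 * k + 1 : ℕ) : ℝ) + 1 = 2 * ((k : ℝ) + 1) := by push_cast; ring
    simp only [oddPart, hk, mul_pow, (odd_two_mul_add_one k).neg_one_pow]
    field_simp
    norm_num
  rw [show (1 - 2 / 2 ^ p) * a = a - 2 * (0 + a / 2 ^ p) by ring]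
  exact (h.sub ((heven.even_add_odd hodd).mul_left 2)).congr_fun fun n => by
    simp only [oddPart]; ring

theorem integral_log_div_one_add : ∫ t in (0:ℝ)..1, log t / (1 + t) = -(π ^ 2 / 12) := by
  let F : ℕ → ℝ → ℝ := fun n t => (-t) ^ n * log t
  have hF_eq (n : ℕ) : F n = fun t => (-1) ^ n * (t ^ n * log t) := by
    ext t; simp only [F]; rw [neg_pow]; ring
  have hIoo {f : ℝ → ℝ} : ∫ t in (0:ℝ)..1, f t = ∫ t in Ioo 0 1, f t := by
    rw [integral_of_le zero_le_one, integral_Ioc_eq_integral_Ioo]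
  have hF_int (n : ℕ) : IntegrableOn (F n) (Ioo 0 1) := by
    refine (intervalIntegrable_iff_integrableOn_Ioo_of_le zero_le_one).mp ?_
    rw [hF_eq]
    exact (intervalIntegrable_pow_mul_log n 0 1).const_mul _
  have hF_integral (n : ℕ) : ∫ t in Ioo 0 1, F n t = -((-1) ^ n / ((n : ℝ) + 1) ^ 2) := by
    rw [hF_eq, MeasureTheory.integral_const_mul, ← hIoo, integral_pow_mul_log]
    ring
  have hF_norm (n : ℕ) : ∫ t in Ioo 0 1, ‖F n t‖ = 1 / ((n : ℝ) + 1) ^ 2 := by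
    have : ∀ t ∈ Ioo (0:ℝ) 1, ‖F n t‖ = -(t ^ n * log t) := by
      intro t ht
      rw [hF_eq, norm_mul, norm_pow, norm_neg, norm_one, one_pow, one_mul, norm_of_nonpos
        (mul_nonpos_of_nonneg_of_nonpos (pow_nonneg ht.1.le n) (log_nonpos ht.1.le ht.2.le))]
    rw [setIntegral_congr_fun measurableSet_Ioo this, MeasureTheory.integral_neg, ← hIoo,
      integral_pow_mul_log]
    ring
  have hF_tsum : ∀ t ∈ Ioo (0:ℝ) 1, ∑' n, F n t = log t / (1 + t) := by
    intro t ht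
    have : ‖-t‖ < 1 := by rw [norm_neg, norm_of_nonneg ht.1.le]; exact ht.2
    rw [tsum_mul_right, tsum_geometric_of_norm_lt_one this, sub_neg_eq_add, inv_mul_eq_div]
  have hsum := hasSum_integral_of_summable_integral_norm hF_int
    (by simpa only [hF_norm] using hasSum_one_div_succ_sq.summable)
  rw [funext hF_integral, setIntegral_congr_fun measurableSet_Ioo hF_tsum] at hsum
  rw [hIoo, hsum.unique hasSum_one_div_succ_sq.neg_one_pow_div_succ_pow.neg]
  ring

noncomputable def cayley (t : ℝ) : ℝ := (1 - t) / (1 + t)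

section cayley

variable {t : ℝ}

theorem one_sub_cayley (ht : 1 + t ≠ 0) : 1 - cayley t = 2 * t / (1 + t) := by
  rw [cayley]; field_simp; ring

theorem one_add_cayley (ht : 1 + t ≠ 0) : 1 + cayley t = 2 / (1 + t) := by
  rw [cayley]; field_simp; ring

theorem cayley_cayley (ht : 1 + t ≠ 0) : cayley (cayley t) = t := by
  rw [cayley, one_sub_cayley ht, one_add_cayley ht]
  field_simp

theorem hasDerivAt_cayley (ht : 1 + t ≠ 0) : HasDerivAt cayley (-2 / (1 + t) ^ 2) t := by
  refine (((hasDerivAt_id t).const_sub 1).div ((hasDerivAt_id t).const_add 1) ht).congr_deriv ?_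
  simp only [id]
  field_simp
  ring

theorem mapsTo_cayley_Ioo : MapsTo cayley (Ioo 0 1) (Ioo 0 1) := by
  rintro t ⟨ht₀, ht₁⟩
  constructor
  · exact div_pos (by linarith) (by linarith)
  · rw [cayley, div_lt_one (by linarith)]; linarith

theorem injOn_cayley_Ioo : InjOn cayley (Ioo 0 1) := by
  intro s hs t ht hst
  rw [← cayley_cayley (by linarith [hs.1] : 1 + s ≠ 0), hst, cayley_cayley (by linarith [ht.1])]

theorem image_cayley_Ioo : cayley '' Ioo 0 1 = Ioo 0 1 := by
  refine mapsTo_cayley_Ioo.image_subset.antisymm fun t ht => ?_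
  exact ⟨cayley t, mapsTo_cayley_Ioo ht, cayley_cayley (by linarith [ht.1])⟩

end cayley

theorem integral_comp_cayley {E : Type*} [NormedAddCommGroup E] [NormedSpace ℝ E]
    (g : ℝ → E) :
    ∫ x in (0:ℝ)..1, g x = ∫ t in (0:ℝ)..1, (2 / (1 + t) ^ 2) • g (cayley t) := by
  simp only [integral_of_le zero_le_one, integral_Ioc_eq_integral_Ioo]
  conv_lhs => rw [← image_cayley_Ioo]
  rw [integral_image_eq_integral_abs_deriv_smul measurableSet_Ioo
    (fun t ht => (hasDerivAt_cayley (by linarith [ht.1])).hasDerivWithinAt) injOn_cayley_Ioo]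
  refine setIntegral_congr_fun measurableSet_Ioo fun t _ => ?_
  rw [abs_div, abs_neg, abs_two, abs_of_nonneg (sq_nonneg _)]

theorem one_add_ne_zero_of_mem_uIcc : ∀ t ∈ uIcc (0:ℝ) 1, 1 + t ≠ 0 := by
  intro t ht
  rw [uIcc_of_le zero_le_one] at ht
  linarith [ht.1]

theorem intervalIntegrable_log_div_one_add :
    IntervalIntegrable (fun t => log t / (1 + t)) volume 0 1 := by
  simpa only [div_eq_mul_inv] using intervalIntegrable_log'.mul_continuousOn
    (by fun_prop (disch := exact one_add_ne_zero_of_mem_uIcc))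

theorem intervalIntegrable_log_two_sub_log_one_add_div_one_add :
    IntervalIntegrable (fun t => (log 2 - log (1 + t)) / (1 + t)) volume 0 1 :=
  ContinuousOn.intervalIntegrable (by fun_prop (disch := exact one_add_ne_zero_of_mem_uIcc))

theorem integral_log_two_sub_log_one_add_div_one_add :
    ∫ t in (0:ℝ)..1, (log 2 - log (1 + t)) / (1 + t) = log 2 ^ 2 / 2 := by
  have hderiv : ∀ t ∈ uIcc (0:ℝ) 1,
      HasDerivAt (fun t => log 2 * log (1 + t) - log (1 + t) ^ 2 / 2)
        ((log 2 - log (1 + t)) / (1 + t)) t := by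
    intro t ht
    have h1t := one_add_ne_zero_of_mem_uIcc t ht
    have hlog := ((hasDerivAt_id t).const_add 1).log h1t
    refine ((hlog.const_mul (log 2)).sub ((hlog.pow 2).div_const 2)).congr_deriv ?_
    simp only [id]
    field_simp
    ring
  rw [integral_eq_sub_of_hasDerivAt hderiv intervalIntegrable_log_two_sub_log_one_add_div_one_add]
  norm_num
  ring

/-- `∫₀¹ log(1−x)/(1+x) dx = (log(2)² − π²/6)/2`. -/
theorem integral_log_one_sub_div_one_add :
    ∫ x in (0:ℝ)..1, Real.log (1 - x) / (1 + x) =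
      (Real.log 2 ^ 2 - π ^ 2 / 6) / 2 := by
  have hsplit : ∀ t ∈ uIoc (0:ℝ) 1,
      (2 / (1 + t) ^ 2) • (log (1 - cayley t) / (1 + cayley t)) =
        log t / (1 + t) + (log 2 - log (1 + t)) / (1 + t) := by
    intro t ht
    have h1t := one_add_ne_zero_of_mem_uIcc t (uIoc_subset_uIcc ht)
    rw [uIoc_of_le zero_le_one] at ht
    rw [smul_eq_mul, one_sub_cayley h1t, one_add_cayley h1t,
      log_div (mul_pos two_pos ht.1).ne' h1t, log_mul two_ne_zero ht.1.ne']
    field_simp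
    ring
  rw [integral_comp_cayley, integral_congr_ae (ae_of_all _ hsplit),
    intervalIntegral.integral_add intervalIntegrable_log_div_one_add
      intervalIntegrable_log_two_sub_log_one_add_div_one_add,
    integral_log_div_one_add, integral_log_two_sub_log_one_add_div_one_add]
  ring
end

section
/- For all n ∈ ℕ, ∫₀¹ xⁿ·( −log(1 − x/2) )/(2+x) dx = (−2)ⁿ·( Σ_{i=1}^{n} ((−1)ⁱ/i)·Σ_{j=1}^{i} 1/(2ʲ·j) + log(2)·( log(3) − Σ_{i=1}^{n} (−1)ⁱ/i + Σ_{i=1}^{n} 1/((−2)ⁱ·i) ) + π²/12 − (5/2)·log(2)² − Li₂(1/4) ), where Li₂(1/4) = Σ_{k=1}^{∞} (1/4)ᵏ/k². -/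
/-! Write `Iₙ` for the integral. Since `x^(n+1)/(2+x) = xⁿ - 2xⁿ/(2+x)`, we get
`Iₙ₊₁ = -2 Iₙ + Jₙ` with `Jₙ = ∫₀¹ xⁿ (-log (1 - x/2))`, which is elementary: after `x = 2t`,
`((1 - t^(n+1)) log (1 - t) + ∑_{j ≤ n} t^(j+1)/(j+1)) / (n+1)` is a primitive.
Unrolling the recurrence leaves `I₀`, which has the primitive
`-log (1 - x/2) log ((2+x)/4) - Li₂ ((2-x)/4)`. Its value at `0` involves
`Li₂ (1/2) = π²/12 - log² 2 / 2`, an instance of Euler's reflection formula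
`Li₂ x + Li₂ (1-x) + log x log (1-x) = π²/6`: the left side has derivative zero on `(0, 1)`
and is continuous at `0`, where it equals `Li₂ 1 = ζ(2)`. -/

open MeasureTheory Real Filter Topology Set Asymptotics

-- The series defines `Li₂` on `[-1, 1]`; outside, it diverges and `tsum` returns `0`.
noncomputable def dilog (x : ℝ) : ℝ := ∑' k : ℕ, x ^ (k + 1) / ((k : ℝ) + 1) ^ 2

lemma hasSum_one_div_nat_add_one_sq :
    HasSum (fun k : ℕ => 1 / ((k : ℝ) + 1) ^ 2) (π ^ 2 / 6) := by
  simpa using (hasSum_nat_add_iff' 1).mpr hasSum_zeta_two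

lemma norm_pow_succ_div_sq_le {x : ℝ} (hx : |x| ≤ 1) (k : ℕ) :
    ‖x ^ (k + 1) / ((k : ℝ) + 1) ^ 2‖ ≤ 1 / ((k : ℝ) + 1) ^ 2 := by
  rw [norm_div, norm_pow, Real.norm_eq_abs, Real.norm_of_nonneg (by positivity)]
  gcongr
  exact pow_le_one₀ (abs_nonneg x) hx

lemma continuousOn_dilog : ContinuousOn dilog (Icc (-1) 1) :=
  continuousOn_tsum (fun _ => by fun_prop) hasSum_one_div_nat_add_one_sq.summable
    fun k _ hx => norm_pow_succ_div_sq_le (abs_le.mpr hx) k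

@[simp] lemma dilog_zero : dilog 0 = 0 := by simp [dilog]

@[simp] lemma dilog_one : dilog 1 = π ^ 2 / 6 := by
  simpa [dilog] using hasSum_one_div_nat_add_one_sq.tsum_eq

lemma hasDerivAt_dilog {x : ℝ} (hx : |x| < 1) (hx0 : x ≠ 0) :
    HasDerivAt dilog (-log (1 - x) / x) x := by
  set r : ℝ := (1 + |x|) / 2 with hr
  have hr0 : 0 < r := by positivity
  have hu : Summable (fun k : ℕ => r ^ k) := summable_geometric_of_lt_one hr0.le (by linarith)
  have hderiv : HasDerivAt dilog (∑' k : ℕ, x ^ k / ((k : ℝ) + 1)) x := by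
    refine hasDerivAt_tsum_of_isPreconnected
      (g := fun (k : ℕ) (y : ℝ) => y ^ (k + 1) / ((k : ℝ) + 1) ^ 2)
      (g' := fun (k : ℕ) (y : ℝ) => y ^ k / ((k : ℝ) + 1)) hu isOpen_Ioo isPreconnected_Ioo
      (fun k y _ => ?_) (fun k y hy => ?_) (by simpa using hr0 : (0 : ℝ) ∈ Ioo (-r) r) ?_
      (abs_lt.mp (by linarith))
    · refine ((hasDerivAt_pow (k + 1) y).div_const (((k : ℝ) + 1) ^ 2)).congr_deriv ?_
      push_cast
      field_simp
    · rw [norm_div, norm_pow, Real.norm_eq_abs, Real.norm_of_nonneg (by positivity)]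
      refine div_le_of_le_mul₀ (by positivity) (by positivity) ?_
      have : |y| ≤ r := (abs_lt.mpr hy).le
      nlinarith [pow_le_pow_left₀ (abs_nonneg y) this k, pow_nonneg hr0.le k,
        (k.cast_nonneg : (0 : ℝ) ≤ k)]
    · simp
  have hlog : x * ∑' k : ℕ, x ^ k / ((k : ℝ) + 1) = -log (1 - x) := by
    rw [← tsum_mul_left, ← (hasSum_pow_div_log_of_abs_lt_one hx).tsum_eq]
    congr 1 with k
    ring
  rwa [← hlog, mul_div_cancel_left₀ _ hx0]

lemma tendsto_log_mul_log_one_sub_nhds_zero :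
    Tendsto (fun x => log x * log (1 - x)) (𝓝 0) (𝓝 0) := by
  have hlog : (fun x : ℝ => log (1 - x)) =O[𝓝 0] fun x => x := by
    simpa using (((hasDerivAt_id (0 : ℝ)).const_sub 1).log (by norm_num)).isBigO_sub
  have hmul : Tendsto (fun x : ℝ => log x * x) (𝓝 0) (𝓝 0) := by
    simpa [mul_comm] using continuous_mul_log.tendsto 0
  exact ((isBigO_refl log _).mul hlog).trans_tendsto hmul

lemma hasDerivAt_dilog_add_dilog_one_sub {x : ℝ} (hx : x ∈ Ioo 0 1) :
    HasDerivAt (fun y => dilog y + dilog (1 - y) + log y * log (1 - y)) 0 x := by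
  obtain ⟨hx0, hx1⟩ := hx
  have h1 := hasDerivAt_dilog (abs_lt.mpr ⟨by linarith, hx1⟩) hx0.ne'
  have h1x : 1 - x ≠ 0 := (sub_pos.mpr hx1).ne'
  have h2 := (hasDerivAt_dilog (abs_lt.mpr ⟨by linarith, by linarith⟩) h1x).comp x
    ((hasDerivAt_id' x).const_sub 1)
  have h3 := (hasDerivAt_log hx0.ne').mul (((hasDerivAt_id' x).const_sub 1).log h1x)
  refine ((h1.add h2).add h3).congr_deriv ?_
  rw [sub_sub_cancel]
  field_simp
  ring

-- Euler's reflection formula.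
lemma dilog_add_dilog_one_sub {x : ℝ} (hx : x ∈ Icc 0 1) :
    dilog x + dilog (1 - x) + log x * log (1 - x) = π ^ 2 / 6 := by
  rcases hx.2.eq_or_lt with rfl | hx1
  · simp
  have hcont :
      ContinuousOn (fun y => dilog y + dilog (1 - y) + log y * log (1 - y)) (Icc 0 x) := by
    refine (ContinuousOn.add ?_ ?_).add fun y hy => ?_
    · exact continuousOn_dilog.mono (Icc_subset_Icc (by norm_num) hx1.le)
    · exact continuousOn_dilog.comp (by fun_prop)
        fun y hy => ⟨by linarith [hy.2], by linarith [hy.1]⟩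
    · rcases hy.1.eq_or_lt with rfl | hy0
      · simpa [ContinuousWithinAt] using
          tendsto_log_mul_log_one_sub_nhds_zero.mono_left nhdsWithin_le_nhds
      · have h1y : 1 - y ≠ 0 := by linarith [hy.2]
        exact ((continuousAt_log hy0.ne').mul
          ((continuous_const.sub continuous_id).continuousAt.log h1y)).continuousWithinAt
  have := intervalIntegral.integral_eq_sub_of_hasDerivAt_of_le hx.1 hcont
    (fun y hy => hasDerivAt_dilog_add_dilog_one_sub ⟨hy.1, hy.2.trans hx1⟩) intervalIntegrable_const
  simp only [intervalIntegral.integral_zero, dilog_zero, sub_zero, dilog_one, zero_add, log_zero,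
    log_one, mul_zero, add_zero] at this
  linarith

lemma dilog_one_half : dilog (1 / 2) = π ^ 2 / 12 - log 2 ^ 2 / 2 := by
  have := dilog_add_dilog_one_sub (x := 1 / 2) ⟨by norm_num, by norm_num⟩
  rw [show (1 : ℝ) - 1 / 2 = 1 / 2 by norm_num, one_div, log_inv] at this
  linarith

lemma hasDerivAt_neg_log_one_sub_half_mul_log_sub_dilog {x : ℝ} (hx : x ∈ Ioo (-2) 2) :
    HasDerivAt (fun y => -log (1 - y / 2) * log ((2 + y) / 4) - dilog ((2 - y) / 4))
      (-log (1 - x / 2) / (2 + x)) x := by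
  obtain ⟨hx₁, hx₂⟩ := hx
  have hu := (((hasDerivAt_id' x).div_const 2).const_sub 1).log (by linarith : 1 - x / 2 ≠ 0)
  have hv := (((hasDerivAt_id' x).const_add 2).div_const 4).log (by linarith : (2 + x) / 4 ≠ 0)
  have hw := (hasDerivAt_dilog (abs_lt.mpr ⟨by linarith, by linarith⟩)
    (by linarith : (2 - x) / 4 ≠ 0)).comp x (((hasDerivAt_id' x).const_sub 2).div_const 4)
  refine ((hu.fun_neg.mul hv).sub hw).congr_deriv ?_
  rw [show 1 - (2 - x) / 4 = (2 + x) / 4 by ring]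
  have : 2 - x ≠ 0 := by linarith
  have : 2 + x ≠ 0 := by linarith
  field_simp
  ring

lemma integral_neg_log_one_sub_half_div_two_add :
    ∫ x in (0 : ℝ)..1, -log (1 - x / 2) / (2 + x) =
      log 2 * log 3 + π ^ 2 / 12 - 5 / 2 * log 2 ^ 2 - dilog (1 / 4) := by
  have hcont : ContinuousOn (fun x : ℝ => -log (1 - x / 2) / (2 + x)) (uIcc 0 1) := by
    fun_prop (disch := intro x hx; rw [uIcc_of_le zero_le_one] at hx; linarith [hx.1, hx.2])
  rw [intervalIntegral.integral_eq_sub_of_hasDerivAt (fun x hx =>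
    hasDerivAt_neg_log_one_sub_half_mul_log_sub_dilog ?_) hcont.intervalIntegrable]
  · have hhalf : log (1 / 2) = -log 2 := by rw [one_div, log_inv]
    have hlog : log (3 / 4) = log 3 - 2 * log 2 := by
      rw [log_div (by norm_num) (by norm_num), show (4 : ℝ) = 2 ^ 2 by norm_num, log_pow]
      push_cast
      ring
    norm_num [dilog_one_half, hlog, hhalf]
    ring
  · rw [uIcc_of_le zero_le_one] at hx
    exact ⟨by linarith [hx.1], by linarith [hx.2]⟩

open Finset in
lemma hasDerivAt_primitive_pow_mul_neg_log_one_sub (m : ℕ) {t : ℝ} (ht : t < 1) :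
    HasDerivAt (fun s => ((1 - s ^ (m + 1)) * log (1 - s) +
        ∑ j ∈ range (m + 1), s ^ (j + 1) / (j + 1)) / (m + 1)) (t ^ m * -log (1 - t)) t := by
  have hlog := ((hasDerivAt_id' t).const_sub 1).log (sub_pos.mpr ht).ne'
  have hpow := (hasDerivAt_pow (m + 1) t).const_sub 1
  have hsum : HasDerivAt (fun s => ∑ j ∈ range (m + 1), s ^ (j + 1) / ((j : ℝ) + 1))
      (∑ j ∈ range (m + 1), t ^ j) t := by
    refine HasDerivAt.fun_sum fun j _ => ?_
    refine ((hasDerivAt_pow (j + 1) t).div_const ((j : ℝ) + 1)).congr_deriv ?_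
    push_cast
    field_simp
  have hgeom := mul_neg_geom_sum t (m + 1)
  refine (((hpow.mul hlog).add hsum).div_const ((m : ℝ) + 1)).congr_deriv ?_
  have : 1 - t ≠ 0 := (sub_pos.mpr ht).ne'
  rw [← hgeom]
  push_cast
  field_simp
  ring

open Finset in
lemma integral_pow_mul_neg_log_one_sub (m : ℕ) {a : ℝ} (ha : a < 1) :
    ∫ t in (0 : ℝ)..a, t ^ m * -log (1 - t) =
      ((1 - a ^ (m + 1)) * log (1 - a) + ∑ j ∈ range (m + 1), a ^ (j + 1) / (j + 1)) /
        (m + 1) := by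
  have hsub : uIcc 0 a ⊆ Iio 1 := fun t ht => ht.2.trans_lt (max_lt one_pos ha)
  have hcont : ContinuousOn (fun t : ℝ => t ^ m * -log (1 - t)) (uIcc 0 a) := by
    fun_prop (disch := intro t ht; exact (sub_pos.mpr (hsub ht)).ne')
  rw [intervalIntegral.integral_eq_sub_of_hasDerivAt
    (fun t ht => hasDerivAt_primitive_pow_mul_neg_log_one_sub m (hsub ht)) hcont.intervalIntegrable]
  simp

lemma sum_Icc_one_eq_sum_range {M : Type*} [AddCommMonoid M] (f : ℕ → M) (n : ℕ) :
    ∑ i ∈ Finset.Icc 1 n, f i = ∑ i ∈ Finset.range n, f (i + 1) := by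
  induction n with
  | zero => simp
  | succ n ih => rw [Finset.sum_Icc_succ_top (by omega), ih, Finset.sum_range_succ]

lemma integral_pow_mul_neg_log_one_sub_half (m : ℕ) :
    ∫ x in (0 : ℝ)..1, x ^ m * -log (1 - x / 2) =
      ((1 - 2 ^ (m + 1)) * log 2 +
        2 ^ (m + 1) * ∑ j ∈ Finset.Icc 1 (m + 1), 1 / (2 ^ j * (j : ℝ))) / (m + 1) := by
  have hscale (x : ℝ) :
      x ^ m * -log (1 - x / 2) = 2 ^ m * ((x / 2) ^ m * -log (1 - x / 2)) := by
    rw [div_pow]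
    field_simp
  simp_rw [hscale]
  rw [intervalIntegral.integral_const_mul,
    intervalIntegral.integral_comp_div (fun t => t ^ m * -log (1 - t)) two_ne_zero, zero_div,
    integral_pow_mul_neg_log_one_sub m (by norm_num), sum_Icc_one_eq_sum_range, smul_eq_mul]
  have hhalf : log (1 - 1 / 2) = -log 2 := by
    rw [show (1 : ℝ) - 1 / 2 = 2⁻¹ by norm_num, log_inv]
  have hsum : ∑ j ∈ Finset.range (m + 1), (1 / 2 : ℝ) ^ (j + 1) / (j + 1) =
      ∑ j ∈ Finset.range (m + 1), 1 / (2 ^ (j + 1) * ((j + 1 : ℕ) : ℝ)) :=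
    Finset.sum_congr rfl fun j _ => by rw [one_div_pow]; push_cast; field_simp
  rw [hhalf, hsum, one_div_pow]
  field_simp
  ring

lemma integral_pow_succ_mul_neg_log_one_sub_half_div_two_add (n : ℕ) :
    ∫ x in (0 : ℝ)..1, x ^ (n + 1) * -log (1 - x / 2) / (2 + x) =
      -2 * (∫ x in (0 : ℝ)..1, x ^ n * -log (1 - x / 2) / (2 + x)) +
        ∫ x in (0 : ℝ)..1, x ^ n * -log (1 - x / 2) := by
  have hpos : ∀ x ∈ uIcc (0 : ℝ) 1, 0 < 2 + x := fun x hx => by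
    rw [uIcc_of_le zero_le_one] at hx; linarith [hx.1]
  have hsplit : ∀ x ∈ uIcc (0 : ℝ) 1, x ^ (n + 1) * -log (1 - x / 2) / (2 + x) =
      -2 * (x ^ n * -log (1 - x / 2) / (2 + x)) + x ^ n * -log (1 - x / 2) := fun x hx => by
    have := (hpos x hx).ne'
    field_simp
    ring
  have hcont : ContinuousOn (fun x : ℝ => x ^ n * -log (1 - x / 2)) (uIcc 0 1) := by
    fun_prop (disch := intro x hx; rw [uIcc_of_le zero_le_one] at hx; linarith [hx.2])
  rw [intervalIntegral.integral_congr hsplit, intervalIntegral.integral_add,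
    intervalIntegral.integral_const_mul]
  · exact (hcont.div (by fun_prop) fun x hx => (hpos x hx).ne').intervalIntegrable.const_mul _
  · exact hcont.intervalIntegrable

lemma eq_pow_mul_add_sum_of_succ_eq {K : Type*} [Field K] {a b : ℕ → K} {c : K} (hc : c ≠ 0)
    (h : ∀ n, a (n + 1) = c * a n + b (n + 1)) (n : ℕ) :
    a n = c ^ n * (a 0 + ∑ i ∈ Finset.Icc 1 n, b i / c ^ i) := by
  induction n with
  | zero => simp
  | succ n ih =>
    rw [h, ih, Finset.sum_Icc_succ_top (by omega)]
    field_simp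
    ring

/-- Mellin transform of `−log(1 − x/2)/(2+x)`. -/
theorem mellin_neg_log_div (n : ℕ) :
    ∫ x in (0:ℝ)..1, x ^ n * (-Real.log (1 - x / 2)) / (2 + x) =
      (-2 : ℝ) ^ n *
        ((∑ i ∈ Finset.Icc 1 n,
            ((-1 : ℝ) ^ i / i) * ∑ j ∈ Finset.Icc 1 i, 1 / (2 ^ j * (j : ℝ))) +
          Real.log 2 *
            (Real.log 3 - (∑ i ∈ Finset.Icc 1 n, (-1 : ℝ) ^ i / i) +
              ∑ i ∈ Finset.Icc 1 n, 1 / ((-2 : ℝ) ^ i * i)) +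
          π ^ 2 / 12 - (5 / 2) * Real.log 2 ^ 2 -
          ∑' k : ℕ, (1 / 4 : ℝ) ^ (k + 1) / ((k : ℝ) + 1) ^ 2) := by
  set b : ℕ → ℝ := fun i =>
    ((1 - 2 ^ i) * log 2 + 2 ^ i * ∑ j ∈ Finset.Icc 1 i, 1 / (2 ^ j * (j : ℝ))) / i with hb
  have hrec (m : ℕ) : ∫ x in (0 : ℝ)..1, x ^ (m + 1) * -log (1 - x / 2) / (2 + x) =
      -2 * (∫ x in (0 : ℝ)..1, x ^ m * -log (1 - x / 2) / (2 + x)) + b (m + 1) := by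
    rw [integral_pow_succ_mul_neg_log_one_sub_half_div_two_add,
      integral_pow_mul_neg_log_one_sub_half, hb]
    push_cast
    rfl
  have hterm (i : ℕ) : b i / (-2) ^ i =
      (-1) ^ i / i * ∑ j ∈ Finset.Icc 1 i, 1 / (2 ^ j * (j : ℝ)) +
        log 2 * (1 / ((-2) ^ i * i) - (-1) ^ i / i) := by
    rw [show (-2 : ℝ) ^ i = (-1) ^ i * 2 ^ i by rw [← mul_pow]; norm_num]
    rcases neg_one_pow_eq_or ℝ i with h | h <;> rw [h] <;> field_simp <;> ring
  rw [eq_pow_mul_add_sum_of_succ_eq (a := fun m => ∫ x in (0 : ℝ)..1,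
    x ^ m * -log (1 - x / 2) / (2 + x)) (by norm_num) hrec n]
  simp only [pow_zero, one_mul, integral_neg_log_one_sub_half_div_two_add, hterm,
    Finset.sum_add_distrib, Finset.sum_sub_distrib, ← Finset.mul_sum, dilog]
  ring
end
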